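/- Let H be a disconnected graph of order m whose connected components are H^1, …, H^k of orders a_1, …, a_k respectively, with a_k = max{a_i : 1 ≤ i ≤ k}. Then min{ m − a_k, ⌊m/2⌋ } ≤ sdim_f(K_1 ⊙ H) ≤ m/2. -/

import Mathlib

open SimpleGraph

/-- `Sset G x y` is the set `S{x,y}` of vertices `z` such that `x` lies on some shortest
`y`–`z` path or `y` lies on some shortest `x`–`z` path in `G`. -/
def Sset {V : Type*} (G : SimpleGraph V) (x y : V) : Set V :=
  {z | (∃ p : G.Walk y z, p.length = G.dist y z ∧ x ∈ p.support) ∨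
       (∃ p : G.Walk x z, p.length = G.dist x z ∧ y ∈ p.support)}

/-- A strong resolving function of `G`: `g : V → [0,1]` with `g(S{x,y}) ≥ 1` for all
distinct vertices `x, y`. -/
def IsSRF {V : Type*} (G : SimpleGraph V) (g : V → ℝ) : Prop :=
  (∀ v, 0 ≤ g v ∧ g v ≤ 1) ∧ ∀ x y : V, x ≠ y → 1 ≤ ∑ᶠ z ∈ Sset G x y, g z

/-- The fractional strong metric dimension of `G`. -/
noncomputable def sdimf {V : Type*} (G : SimpleGraph V) : ℝ :=
  sInf {s : ℝ | ∃ g : V → ℝ, IsSRF G g ∧ s = ∑ᶠ v, g v}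

/-- A strong resolving set of `G`: every pair of distinct vertices is strongly resolved
by some vertex of `S` (i.e. some vertex of `S` lies in `S{x,y}`). -/
def IsSRSet {V : Type*} (G : SimpleGraph V) (S : Set V) : Prop :=
  ∀ x y : V, x ≠ y → ∃ z ∈ S, z ∈ Sset G x y

/-- The strong metric dimension of `G`: the minimum cardinality of a strong resolving set. -/
noncomputable def sdim {V : Type*} (G : SimpleGraph V) : ℕ :=
  sInf {n : ℕ | ∃ S : Set V, IsSRSet G S ∧ S.ncard = n}

/-- `u` is maximally distant from `v`: `d(u,v) ≥ d(w,v)` for every neighbor `w` of `u`. -/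
def MaxDistFrom {V : Type*} (G : SimpleGraph V) (u v : V) : Prop :=
  ∀ w : V, G.Adj u w → G.dist w v ≤ G.dist u v

/-- `u` and `v` are mutually maximally distant (MMD) in `G`. -/
def MMD {V : Type*} (G : SimpleGraph V) (u v : V) : Prop :=
  u ≠ v ∧ MaxDistFrom G u v ∧ MaxDistFrom G v u

/-- The strong resolving graph of `G` (on the ambient vertex set): `u ~ v` iff `u` MMD `v`. -/
def SRGraph {V : Type*} (G : SimpleGraph V) : SimpleGraph V where
  Adj := MMD G
  symm := ⟨fun _ _ h => ⟨h.1.symm, h.2.2, h.2.1⟩⟩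
  loopless := ⟨fun _ h => h.1 rfl⟩

/-- `M(G)`: the set of vertices that are mutually maximally distant with some vertex. -/
def Mset {V : Type*} (G : SimpleGraph V) : Set V := {x | ∃ y, MMD G x y}

/-- The matching number of `G`. -/
noncomputable def matchNum {V : Type*} (G : SimpleGraph V) : ℕ :=
  sSup {n : ℕ | ∃ M : G.Subgraph, M.IsMatching ∧ M.edgeSet.ncard = n}

/-- The corona product `G ⊙ H`. -/
def corona {V W : Type*} (G : SimpleGraph V) (H : SimpleGraph W) :
    SimpleGraph (V ⊕ V × W) where
  Adj x y :=
    match x, y with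
    | Sum.inl u, Sum.inl u' => G.Adj u u'
    | Sum.inl u, Sum.inr iw => u = iw.1
    | Sum.inr iw, Sum.inl u => iw.1 = u
    | Sum.inr iw, Sum.inr iw' => iw.1 = iw'.1 ∧ H.Adj iw.2 iw'.2
  symm := by
    constructor
    rintro (u | iw) (u' | iw') h
    · exact G.adj_symm h
    · exact h.symm
    · exact h.symm
    · exact ⟨h.1.symm, H.adj_symm h.2⟩
  loopless := by
    constructor
    rintro (u | iw) h
    · exact G.irrefl h
    · exact H.irrefl h.2

/-- `K₁ ⊙ H`: the graph obtained from `H` by adding one new vertex adjacent to every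
vertex of `H`. -/
def cone {W : Type*} (H : SimpleGraph W) : SimpleGraph (Option W) where
  Adj x y :=
    match x, y with
    | none, none => False
    | none, some _ => True
    | some _, none => True
    | some w, some w' => H.Adj w w'
  symm := by
    constructor
    rintro (_ | w) (_ | w') h
    · exact h
    · exact trivial
    · exact trivial
    · exact H.adj_symm h
  loopless := by
    constructor
    rintro (_ | w) h
    · exact h
    · exact H.irrefl h

/-- The lexicographic product `G[H]`. -/
def lexProd {V W : Type*} (G : SimpleGraph V) (H : SimpleGraph W) :
    SimpleGraph (V × W) where
  Adj x y := G.Adj x.1 y.1 ∨ (x.1 = y.1 ∧ H.Adj x.2 y.2)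
  symm := by
    constructor
    rintro x y (h | ⟨h1, h2⟩)
    · exact Or.inl (G.adj_symm h)
    · exact Or.inr ⟨h1.symm, H.adj_symm h2⟩
  loopless := by
    constructor
    rintro x (h | ⟨_, h2⟩)
    · exact G.irrefl h
    · exact H.irrefl h2

/-- `SL{x,y} = (N[x] ∪ N[y]) ∩ S{x,y}`. -/
def SLset {W : Type*} (H : SimpleGraph W) (x y : W) : Set W :=
  (insert x (H.neighborSet x) ∪ insert y (H.neighborSet y)) ∩ Sset H x y

/-- A strong locating function of `H`. -/
def IsSLF {W : Type*} (H : SimpleGraph W) (f : W → ℝ) : Prop :=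
  (∀ v, 0 ≤ f v ∧ f v ≤ 1) ∧ ∀ x y : W, x ≠ y → 1 ≤ ∑ᶠ z ∈ SLset H x y, f z

/-- `sl_f(H)`: the minimum weight of a strong locating function of `H`. -/
noncomputable def slf {W : Type*} (H : SimpleGraph W) : ℝ :=
  sInf {s : ℝ | ∃ f : W → ℝ, IsSLF H f ∧ s = ∑ᶠ v, f v}

/-- `u` has a true twin: some other vertex with the same closed neighborhood. -/
def HasTrueTwin {V : Type*} (G : SimpleGraph V) (u : V) : Prop :=
  ∃ v : V, v ≠ u ∧ insert v (G.neighborSet v) = insert u (G.neighborSet u)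

/-- `u` has a false twin: some other vertex with the same open neighborhood. -/
def HasFalseTwin {V : Type*} (G : SimpleGraph V) (u : V) : Prop :=
  ∃ v : V, v ≠ u ∧ G.neighborSet v = G.neighborSet u

/-- `m₁(G)`: number of vertices in type-1 (singleton) classes of the twin relation. -/
noncomputable def m1 {V : Type*} (G : SimpleGraph V) : ℕ :=
  {u : V | ¬ HasTrueTwin G u ∧ ¬ HasFalseTwin G u}.ncard

/-- `m₂(G)`: number of vertices in type-2 (clique) classes of the twin relation. -/
noncomputable def m2 {V : Type*} (G : SimpleGraph V) : ℕ :=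
  {u : V | HasTrueTwin G u}.ncard

/-- `m₃(G)`: number of vertices in type-3 (independent set) classes of the twin relation. -/
noncomputable def m3 {V : Type*} (G : SimpleGraph V) : ℕ :=
  {u : V | HasFalseTwin G u}.ncard

/-- The strong resolving graph of `G` (whose vertex set is `M(G)`) is Hamiltonian:
there is a cycle in `SRGraph G` passing through every vertex of `M(G)`. -/
def SRHamiltonian {V : Type*} (G : SimpleGraph V) : Prop :=
  ∃ (u : V) (p : (SRGraph G).Walk u u), p.IsCycle ∧ ∀ v ∈ Mset G, v ∈ p.support

/-!
Every vertex of `H` lies at distance at most `2` from every other vertex of `K₁ ⊙ H`, so for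
non-adjacent `w ≠ w'` in `H` no third vertex lies on a shortest path through `w` or `w'`:
`S{w,w'} = {w,w'}`, and a strong resolving function `g` satisfies `g w + g w' ≥ 1`. Let `w₀`
minimise `g` on `H`, with value `μ`, and let `C` be its component, of order `c ≤ a`. Then
`g(V) ≥ m μ` and `g(V) ≥ c μ + (m - c)(1 - μ)`, which together give `g(V) ≥ min (m - c) (m / 2)`.
For the upper bound, weight `1/2` on each vertex of `H` works: for a pair involving the apex
and `w`, the set `S{apex, w}` also contains every vertex of `H` outside the component of `w`.
-/

open Finset in
lemma min_sub_card_half_le_sum {ι : Type*} [Fintype ι] [DecidableEq ι] (f : ι → ℝ)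
    (C : Finset ι) {μ : ℝ} (hμ₀ : 0 ≤ μ) (hμ : ∀ i, μ ≤ f i) (hC : ∀ i ∉ C, 1 ≤ μ + f i) :
    min ((Fintype.card ι : ℝ) - #C) (Fintype.card ι / 2) ≤ ∑ i, f i := by
  have hcard : (#Cᶜ : ℝ) = Fintype.card ι - #C := by
    rw [card_compl, Nat.cast_sub (card_le_univ C)]
  have hall : (Fintype.card ι : ℝ) * μ ≤ ∑ i, f i := by
    simpa using card_nsmul_le_sum univ f μ fun i _ => hμ i
  have hin : (#C : ℝ) * μ ≤ ∑ i ∈ C, f i := by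
    simpa using card_nsmul_le_sum C f μ fun i _ => hμ i
  have hout : (#Cᶜ : ℝ) * (1 - μ) ≤ ∑ i ∈ Cᶜ, f i := by
    simpa using card_nsmul_le_sum Cᶜ f (1 - μ) fun i hi => by
      linarith [hC i (mem_compl.mp hi)]
  rw [hcard] at hout
  have hsplit := sum_add_sum_compl C f
  rcases le_total (2 * (#C : ℝ)) (Fintype.card ι) with h2c | h2c
  · refine min_le_of_right_le ?_
    rcases le_total μ (1 / 2) with hμh | hμh <;> nlinarith
  · refine min_le_of_left_le ?_
    nlinarith

lemma add_le_finsum_mem {V : Type*} [Finite V] {g : V → ℝ} (hg : ∀ v, 0 ≤ g v) {s : Set V}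
    {a b : V} (ha : a ∈ s) (hb : b ∈ s) (hab : a ≠ b) : g a + g b ≤ ∑ᶠ z ∈ s, g z := by
  have hsub : ({a, b} : Set V) ⊆ s := Set.insert_subset ha (Set.singleton_subset_iff.mpr hb)
  rw [← finsum_mem_add_sdiff hsub s.toFinite, finsum_mem_pair hab]
  exact le_add_of_nonneg_right (finsum_nonneg fun v => finsum_nonneg fun _ => hg v)

section StrongResolving

variable {V : Type*} {G : SimpleGraph V}

lemma Sset_comm (G : SimpleGraph V) (x y : V) : Sset G x y = Sset G y x :=
  Set.ext fun _ => or_comm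

lemma left_mem_Sset {x y : V} (h : G.Reachable y x) : x ∈ Sset G x y := by
  obtain ⟨p, hp⟩ := h.exists_walk_length_eq_dist
  exact Or.inl ⟨p, hp, p.end_mem_support⟩

lemma right_mem_Sset {x y : V} (h : G.Reachable x y) : y ∈ Sset G x y := by
  obtain ⟨p, hp⟩ := h.exists_walk_length_eq_dist
  exact Or.inr ⟨p, hp, p.end_mem_support⟩

lemma adj_of_mem_support_of_length_eq_dist_le_two {x y z : V} (p : G.Walk y z)
    (hp : p.length = G.dist y z) (hx : x ∈ p.support) (h2 : G.dist y z ≤ 2) (hxy : x ≠ y)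
    (hxz : x ≠ z) : G.Adj y x := by
  classical
  have hsum : (p.takeUntil x hx).length + (p.dropUntil x hx).length = p.length := by
    rw [← Walk.length_append, p.take_spec hx]
  have hyx : G.dist y x ≤ (p.takeUntil x hx).length := dist_le _
  have hxz' : G.dist x z ≤ (p.dropUntil x hx).length := dist_le _
  have hyx₀ : G.dist y x ≠ 0 :=
    dist_ne_zero_iff_ne_and_reachable.mpr ⟨hxy.symm, (p.takeUntil x hx).reachable⟩
  have hxz₀ : G.dist x z ≠ 0 :=
    dist_ne_zero_iff_ne_and_reachable.mpr ⟨hxz, (p.dropUntil x hx).reachable⟩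
  exact dist_eq_one_iff_adj.mp (by omega)

lemma Sset_eq_pair_of_not_adj (hdist : ∀ u v, G.dist u v ≤ 2) {x y : V} (hr : G.Reachable x y)
    (hxy : x ≠ y) (hadj : ¬ G.Adj x y) : Sset G x y = {x, y} := by
  refine Set.Subset.antisymm ?_ ?_
  · rintro z (⟨p, hp, hx⟩ | ⟨p, hp, hy⟩)
    · by_contra hz
      simp only [Set.mem_insert_iff, Set.mem_singleton_iff, not_or] at hz
      exact hadj (adj_of_mem_support_of_length_eq_dist_le_two p hp hx (hdist _ _) hxy
        (Ne.symm hz.1)).symm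
    · by_contra hz
      simp only [Set.mem_insert_iff, Set.mem_singleton_iff, not_or] at hz
      exact hadj (adj_of_mem_support_of_length_eq_dist_le_two p hp hy (hdist _ _) hxy.symm
        (Ne.symm hz.2))
  · rintro z (rfl | rfl)
    · exact left_mem_Sset hr.symm
    · exact right_mem_Sset hr

lemma IsSRF.one_le_add_of_not_adj {g : V → ℝ} (hg : IsSRF G g) (hdist : ∀ u v, G.dist u v ≤ 2)
    {x y : V} (hr : G.Reachable x y) (hxy : x ≠ y) (hadj : ¬ G.Adj x y) : 1 ≤ g x + g y := by
  have h := hg.2 x y hxy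
  rwa [Sset_eq_pair_of_not_adj hdist hr hxy hadj, finsum_mem_pair hxy] at h

lemma sdimf_le_finsum {g : V → ℝ} (hg : IsSRF G g) : sdimf G ≤ ∑ᶠ v, g v :=
  csInf_le ⟨0, by rintro _ ⟨f, hf, rfl⟩; exact finsum_nonneg fun v => (hf.1 v).1⟩ ⟨g, hg, rfl⟩

lemma le_sdimf {b : ℝ} (hne : ∃ g, IsSRF G g) (h : ∀ g, IsSRF G g → b ≤ ∑ᶠ v, g v) :
    b ≤ sdimf G := by
  obtain ⟨g, hg⟩ := hne
  exact le_csInf ⟨_, g, hg, rfl⟩ fun _ ⟨f, hf, hs⟩ => hs ▸ h f hf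

end StrongResolving

section Cone

variable {W : Type*} {H : SimpleGraph W}

lemma cone_adj_none_some (w : W) : (cone H).Adj none (some w) := trivial

lemma cone_adj_some_none (w : W) : (cone H).Adj (some w) none := trivial

lemma cone_adj_some_some {w w' : W} : (cone H).Adj (some w) (some w') ↔ H.Adj w w' := Iff.rfl

lemma cone_reachable (u v : Option W) : (cone H).Reachable u v := by
  have hnone : ∀ x : Option W, (cone H).Reachable x none := by
    rintro (_ | w)
    · rfl
    · exact (cone_adj_some_none w).reachable
  exact (hnone u).trans (hnone v).symm

def coneWalk (w w' : W) : (cone H).Walk (some w) (some w') :=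
  .cons (cone_adj_some_none w) (.cons (cone_adj_none_some w') .nil)

lemma cone_dist_le_two (u v : Option W) : (cone H).dist u v ≤ 2 := by
  rcases u with _ | w <;> rcases v with _ | w'
  · simp
  · exact (dist_le (Walk.cons (cone_adj_none_some (H := H) w') .nil)).trans (by simp)
  · exact (dist_le (Walk.cons (cone_adj_some_none (H := H) w) .nil)).trans (by simp)
  · exact (dist_le (coneWalk (H := H) w w')).trans (by simp [coneWalk])

lemma cone_dist_some_some {w w' : W} (hne : w ≠ w') (hadj : ¬ H.Adj w w') :
    (cone H).dist (some w) (some w') = 2 := by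
  have h₀ : (cone H).dist (some w) (some w') ≠ 0 :=
    dist_ne_zero_iff_ne_and_reachable.mpr ⟨by simpa using hne, cone_reachable _ _⟩
  have h₁ : (cone H).dist (some w) (some w') ≠ 1 := fun h => hadj (cone_adj_some_some.mp (dist_eq_one_iff_adj.mp h))
  have := cone_dist_le_two (H := H) (some w) (some w')
  omega

lemma some_mem_Sset_cone_none {w w' : W} (hne : w ≠ w') (hadj : ¬ H.Adj w w') :
    some w' ∈ Sset (cone H) none (some w) :=
  Or.inl ⟨coneWalk w w', by simp [coneWalk, cone_dist_some_some hne hadj], by simp [coneWalk]⟩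

lemma IsSRF.one_le_cone_add {g : Option W → ℝ} (hg : IsSRF (cone H) g) {w w' : W}
    (hne : w ≠ w') (hadj : ¬ H.Adj w w') : 1 ≤ g (some w) + g (some w') :=
  hg.one_le_add_of_not_adj cone_dist_le_two (cone_reachable _ _) (by simpa using hne) hadj

lemma exists_mem_Sset_cone (hH : ∀ w, ∃ w', w ≠ w' ∧ ¬ H.Adj w w') {x y : Option W}
    (hxy : x ≠ y) :
    ∃ z z' : W, z ≠ z' ∧ some z ∈ Sset (cone H) x y ∧ some z' ∈ Sset (cone H) x y := by
  rcases x with _ | w <;> rcases y with _ | w'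
  · exact absurd rfl hxy
  · obtain ⟨z, hz, hadj⟩ := hH w'
    exact ⟨w', z, hz, right_mem_Sset (cone_reachable _ _), some_mem_Sset_cone_none hz hadj⟩
  · obtain ⟨z, hz, hadj⟩ := hH w
    rw [Sset_comm]
    exact ⟨w, z, hz, right_mem_Sset (cone_reachable _ _), some_mem_Sset_cone_none hz hadj⟩
  · exact ⟨w, w', by simpa using hxy, left_mem_Sset (cone_reachable _ _),
      right_mem_Sset (cone_reachable _ _)⟩

lemma isSRF_cone_half [Finite W] (hH : ∀ w, ∃ w', w ≠ w' ∧ ¬ H.Adj w w') :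
    IsSRF (cone H) fun v => v.elim 0 fun _ => 1 / 2 := by
  have hbounds : ∀ v : Option W, 0 ≤ v.elim (0 : ℝ) (fun _ => 1 / 2) ∧
      v.elim (0 : ℝ) (fun _ => 1 / 2) ≤ 1 := by
    rintro (_ | _) <;> norm_num
  refine ⟨hbounds, fun x y hxy => ?_⟩
  obtain ⟨z, z', hzz', hz, hz'⟩ := exists_mem_Sset_cone hH hxy
  have := add_le_finsum_mem (fun v => (hbounds v).1) hz hz' (by simpa using hzz')
  norm_num at this ⊢
  linarith

lemma sdimf_cone_le_half [Fintype W] (hH : ∀ w, ∃ w', w ≠ w' ∧ ¬ H.Adj w w') :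
    sdimf (cone H) ≤ (Fintype.card W : ℝ) / 2 := by
  refine (sdimf_le_finsum (isSRF_cone_half hH)).trans_eq ?_
  rw [finsum_eq_sum_of_fintype, Fintype.sum_option]
  simp [div_eq_mul_inv]

lemma min_card_sub_supp_le_finsum [Fintype W] {g : Option W → ℝ} (hg : IsSRF (cone H) g)
    {w₀ : W} (hmin : ∀ w, g (some w₀) ≤ g (some w)) :
    min ((Fintype.card W : ℝ) - (H.connectedComponentMk w₀).supp.ncard) (Fintype.card W / 2) ≤
      ∑ᶠ v, g v := by
  classical
  have hC : ∀ w ∉ (H.connectedComponentMk w₀).supp.toFinset, 1 ≤ g (some w₀) + g (some w) := by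
    intro w hw
    have hr : ¬ H.Reachable w₀ w := fun hr => hw (by simpa using ConnectedComponent.eq.mpr hr.symm)
    exact hg.one_le_cone_add (fun h => hr (h ▸ Reachable.refl _)) fun h => hr h.reachable
  rw [Set.ncard_eq_toFinset_card', finsum_eq_sum_of_fintype, Fintype.sum_option]
  exact (min_sub_card_half_le_sum _ _ (hg.1 _).1 hmin hC).trans (le_add_of_nonneg_left (hg.1 _).1)

end Cone

lemma exists_not_reachable_of_not_preconnected {W : Type*} {H : SimpleGraph W}
    (hH : ¬ H.Preconnected) (w : W) : ∃ w', ¬ H.Reachable w w' := by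
  by_contra! h
  obtain ⟨u, v, huv⟩ : ∃ u v, ¬ H.Reachable u v := by simpa [Preconnected] using hH
  exact huv ((h u).symm.trans (h v))

/-- Let `H` be a disconnected graph of order `m`, and let `a` be the
largest order of a connected component of `H`. Then
`min{ m − a, ⌊m/2⌋ } ≤ sdim_f(K₁ ⊙ H) ≤ m/2`. -/
theorem sdimf_cone_disconnected_bounds {W : Type*} [Fintype W] (H : SimpleGraph W)
    (hH : ¬ H.Preconnected)
    (a : ℕ) (ha : a = sSup (Set.range fun C : H.ConnectedComponent => C.supp.ncard)) :
    ((min (Fintype.card W - a) (Fintype.card W / 2) : ℕ) : ℝ) ≤ sdimf (cone H) ∧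
      sdimf (cone H) ≤ (Fintype.card W : ℝ) / 2 := by
  have hfar : ∀ w, ∃ w', w ≠ w' ∧ ¬ H.Adj w w' := fun w => by
    obtain ⟨w', hw'⟩ := exists_not_reachable_of_not_preconnected hH w
    exact ⟨w', fun h => hw' (h ▸ Reachable.refl _), fun h => hw' h.reachable⟩
  refine ⟨le_sdimf ⟨_, isSRF_cone_half hfar⟩ fun g hg => ?_, sdimf_cone_le_half hfar⟩
  obtain ⟨u, -⟩ : ∃ u v, ¬ H.Reachable u v := by simpa [Preconnected] using hH
  obtain ⟨w₀, -, hmin⟩ := Finset.univ.exists_min_image (fun w => g (some w)) ⟨u, Finset.mem_univ u⟩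
  refine le_trans ?_ (min_card_sub_supp_le_finsum hg fun w => hmin w (Finset.mem_univ w))
  set c := (H.connectedComponentMk w₀).supp.ncard
  have hca : c ≤ a := ha ▸ le_csSup (Set.finite_range _).bddAbove ⟨_, rfl⟩
  have hcm : c ≤ Fintype.card W := (Set.ncard_le_ncard (Set.subset_univ _)).trans
    (by simp [Set.ncard_univ])
  rw [Nat.cast_min, ← Nat.cast_sub hcm]
  exact min_le_min (by gcongr) Nat.cast_div_le
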